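/- arXiv:2201.00058 — 2 statements merged into one kernel-verified Lean document; each statement's English description precedes it below -/
import Mathlib

section
/- Let w, w̃ be weight functions on V and α ≥ 0. A nonempty subset σ of the vertex set of Ĝ^{w,w̃} is a simplex of R_α(Ĝ^{w,w̃}) if and only if σ has one of the following three forms, where i_1 < … < i_n are indices in {1,…,N}: (1) {A_{i_1},…,A_{i_k}, A'_{i_k},…,A'_{i_n}} with 1 ≤ k ≤ n, subject to w_{A_{i_r}A_{i_s}} ≤ α whenever r < s and r ≤ k, and min(w_{A_{i_r}A_{i_s}}, w̃_{A_{i_r}A_{i_s}}) ≤ α whenever k ≤ r < s; (2) {A_{i_1},…,A_{i_{k-1}}, A'_{i_k},…,A'_{i_n}} with 1 ≤ k ≤ n+1, subject to w_{A_{i_r}A_{i_s}} ≤ α whenever r < s and r ≤ k−1, and min(w_{A_{i_r}A_{i_s}}, w̃_{A_{i_r}A_{i_s}}) ≤ α whenever k ≤ r < s; (3) {O, A_{i_1},…,A_{i_n}} with w_{A_{i_r}A_{i_s}} ≤ α for all r < s. -/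
open scoped ENNReal
noncomputable section
attribute [local instance] Classical.propDecidable

namespace RTD

/-- The linear map between ℤ/2-spaces of chains given by an explicit coefficient matrix. -/
def lmap {ι κ : Type*} [Fintype ι] (M : ι → κ → ZMod 2) :
    (ι → ZMod 2) →ₗ[ZMod 2] (κ → ZMod 2) where
  toFun f k := ∑ i, M i k * f i
  map_add' f g := by
    funext k
    simp [mul_add, Finset.sum_add_distrib]
  map_smul' c f := by
    funext k
    simp only [Pi.smul_apply, smul_eq_mul, RingHom.id_apply, Finset.mul_sum]
    exact Finset.sum_congr rfl fun i _ => by ring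

variable {U : Type*}

/-- Simplexes of the Vietoris–Rips complex at threshold `α` having `n` vertices.
For `n = 0` this is the empty set, serving as the augmentation generator, so that
position `n` of the augmented chain complex corresponds to homological degree `n - 1`. -/
abbrev Simp [Fintype U] (d : U → U → ℝ≥0∞) (α : ℝ) (n : ℕ) :=
  {σ : Finset U // σ.card = n ∧ ∀ x ∈ σ, ∀ y ∈ σ, x ≠ y → d x y ≤ ENNReal.ofReal α}

/-- Position-`n` chains (over ℤ/2) of the augmented chain complex of the Vietoris–Rips complex. -/
abbrev Ch [Fintype U] (d : U → U → ℝ≥0∞) (α : ℝ) (n : ℕ) := Simp d α n → ZMod 2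

/-- The boundary operator of the augmented chain complex (over ℤ/2 all signs are 1);
the coefficient of `τ` in `∂ σ` is 1 exactly when `τ ⊂ σ`. -/
def bdry [Fintype U] (d : U → U → ℝ≥0∞) (α : ℝ) (n : ℕ) :
    Ch d α (n + 1) →ₗ[ZMod 2] Ch d α n :=
  lmap fun σ τ => if τ.1 ⊆ σ.1 then 1 else 0

def cycles [Fintype U] (d : U → U → ℝ≥0∞) (α : ℝ) :
    (n : ℕ) → Submodule (ZMod 2) (Ch d α n)
  | 0 => ⊤
  | n + 1 => LinearMap.ker (bdry d α n)

/-- Homology of the augmented chain complex at position `n`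
(i.e. reduced homology in degree `n - 1`). -/
abbrev homologyAt [Fintype U] (d : U → U → ℝ≥0∞) (α : ℝ) (n : ℕ) :=
  cycles d α n ⧸ Submodule.comap (cycles d α n).subtype (LinearMap.range (bdry d α n))

/-- Reduced simplicial ℤ/2 homology `H_i`, `i ≥ 0`, of the Vietoris–Rips complex. -/
abbrev Hred [Fintype U] (d : U → U → ℝ≥0∞) (α : ℝ) (i : ℕ) := homologyAt d α (i + 1)

/-- `σ` is a simplex of the Vietoris–Rips complex at threshold `α`. -/
def IsVR [Fintype U] (d : U → U → ℝ≥0∞) (α : ℝ) (σ : Finset U) : Prop :=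
  σ.Nonempty ∧ ∀ x ∈ σ, ∀ y ∈ σ, x ≠ y → d x y ≤ ENNReal.ofReal α

end RTD
namespace RTD

/-- Weight functions take extended nonnegative real values; `wmin` is the pointwise minimum. -/
def wmin {N : ℕ} (w wt : Fin N → Fin N → ℝ≥0∞) : Fin N → Fin N → ℝ≥0∞ :=
  fun i j => min (w i j) (wt i j)

/-- Vertices of the graph Ĝ^{w,w̃}: the vertices `A_i` (`.inl (.inl i)`),
their copies `A'_i` (`.inl (.inr i)`), and the extra vertex `O` (`.inr ()`). -/
abbrev VH (N : ℕ) := (Fin N ⊕ Fin N) ⊕ Unit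

/-- The edge weights of the weighted graph Ĝ^{w,w̃} (values on the diagonal are irrelevant). -/
def dhat {N : ℕ} (w wt : Fin N → Fin N → ℝ≥0∞) : VH N → VH N → ℝ≥0∞
  | Sum.inl (Sum.inl i), Sum.inl (Sum.inl j) => w i j
  | Sum.inl (Sum.inl i), Sum.inl (Sum.inr j) =>
      if i < j then w i j else if i = j then 0 else ⊤
  | Sum.inl (Sum.inr i), Sum.inl (Sum.inl j) =>
      if j < i then w j i else if j = i then 0 else ⊤
  | Sum.inl (Sum.inr i), Sum.inl (Sum.inr j) => if i = j then 0 else min (w i j) (wt i j)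
  | Sum.inl (Sum.inl _), Sum.inr _ => 0
  | Sum.inr _, Sum.inl (Sum.inl _) => 0
  | Sum.inl (Sum.inr _), Sum.inr _ => ⊤
  | Sum.inr _, Sum.inl (Sum.inr _) => ⊤
  | Sum.inr _, Sum.inr _ => 0

/-- The set of unprimed vertices `A_i`, `i ∈ s`, of Ĝ^{w,w̃}. -/
def unp {N : ℕ} (s : Finset (Fin N)) : Finset (VH N) :=
  s.image fun i => Sum.inl (Sum.inl i)

/-- The set of primed vertices `A'_i`, `i ∈ s`, of Ĝ^{w,w̃}. -/
def prm {N : ℕ} (s : Finset (Fin N)) : Finset (VH N) :=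
  s.image fun i => Sum.inl (Sum.inr i)

/-- The extra vertex `O` of Ĝ^{w,w̃}. -/
def vO {N : ℕ} : VH N := Sum.inr ()

/-- The indices `i` with `A_i ∈ τ`. -/
def uIdx {N : ℕ} (τ : Finset (VH N)) : Finset (Fin N) :=
  Finset.univ.filter fun i => Sum.inl (Sum.inl i) ∈ τ

/-- The indices `i` with `A'_i ∈ τ`. -/
def pIdx {N : ℕ} (τ : Finset (VH N)) : Finset (Fin N) :=
  Finset.univ.filter fun i => Sum.inl (Sum.inr i) ∈ τ

end RTD

/-! The infinite weights of `Ĝ^{w,w̃}` forbid `O` together with any `A'_i`, and `A_i` together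
with `A'_j` for `j < i`. So a simplex containing `O` has no primed vertex (form (3)), and a
simplex avoiding `O` is `unp s ∪ prm p`, where `s`, `p` index its unprimed and primed vertices,
with every index of `s` at most every index of `p`. Either some index is shared, and it is then
the index `i_k = max s = min p` of form (1), or all these inequalities are strict (form (2)). -/

theorem Set.pairwise_iff_lt_of_symm {ι : Type*} [LinearOrder ι] {r : ι → ι → Prop} [Std.Symm r]
    {s : Set ι} : s.Pairwise r ↔ ∀ a ∈ s, ∀ b ∈ s, a < b → r a b :=
  ⟨fun h _ ha _ hb hab => h ha hb hab.ne, fun h a ha b hb hab =>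
    hab.lt_or_gt.elim (h a ha b hb) fun hba => Std.Symm.symm _ _ (h b hb a ha hba)⟩

theorem Finset.forall_le_iff_exists_or_forall_lt {ι : Type*} [PartialOrder ι] {s p : Finset ι} :
    (∀ a ∈ s, ∀ b ∈ p, a ≤ b) ↔
      (∃ m, m ∈ s ∧ m ∈ p ∧ (∀ a ∈ s, a ≤ m) ∧ ∀ b ∈ p, m ≤ b) ∨ ∀ a ∈ s, ∀ b ∈ p, a < b := by
  refine ⟨fun h => ?_, ?_⟩
  · by_cases hsp : ∃ m, m ∈ s ∧ m ∈ p
    · obtain ⟨m, hms, hmp⟩ := hsp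
      exact Or.inl ⟨m, hms, hmp, fun a ha => h a ha m hmp, fun b hb => h m hms b hb⟩
    · exact Or.inr fun a ha b hb => (h a ha b hb).lt_of_ne fun hab => hsp ⟨a, ha, hab ▸ hb⟩
  · rintro (⟨m, -, -, hsm, hmp⟩ | h) a ha b hb
    · exact (hsm a ha).trans (hmp b hb)
    · exact (h a ha b hb).le

namespace RTD

theorem isVR_iff_pairwise {U : Type*} [Fintype U] {d : U → U → ℝ≥0∞} {α : ℝ} {σ : Finset U} :
    IsVR d α σ ↔ σ.Nonempty ∧ (σ : Set U).Pairwise fun x y => d x y ≤ ENNReal.ofReal α :=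
  Iff.rfl

section

variable {N : ℕ} {w wt : Fin N → Fin N → ℝ≥0∞} {α : ℝ}

theorem dhat_inl_inr (i j : Fin N) :
    dhat w wt (Sum.inl (Sum.inl i)) (Sum.inl (Sum.inr j)) =
      if i < j then w i j else if i = j then 0 else ⊤ := rfl

theorem dhat_inr_inr (i j : Fin N) :
    dhat w wt (Sum.inl (Sum.inr i)) (Sum.inl (Sum.inr j)) =
      if i = j then 0 else min (w i j) (wt i j) := rfl

theorem dhat_comm (hw : ∀ i j, w i j = w j i) (hwt : ∀ i j, wt i j = wt j i) (x y : VH N) :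
    dhat w wt x y = dhat w wt y x := by
  rcases x with (i | i) | _ <;> rcases y with (j | j) | _ <;> simp [dhat, hw, hwt, eq_comm]

theorem dhat_inl_inr_le_ofReal_iff {i j : Fin N} :
    dhat w wt (Sum.inl (Sum.inl i)) (Sum.inl (Sum.inr j)) ≤ ENNReal.ofReal α ↔
      i ≤ j ∧ (i < j → w i j ≤ ENNReal.ofReal α) := by
  rcases lt_trichotomy i j with h | rfl | h
  · simp [dhat_inl_inr, h, h.le]
  · simp [dhat_inl_inr]
  · simp [dhat_inl_inr, h.not_gt, h.ne', h.not_ge]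

theorem pairwise_unp_iff (hw : ∀ i j, w i j = w j i) {s : Finset (Fin N)} :
    (unp s : Set (VH N)).Pairwise (fun x y => dhat w wt x y ≤ ENNReal.ofReal α) ↔
      ∀ a ∈ s, ∀ b ∈ s, a < b → w a b ≤ ENNReal.ofReal α := by
  have : Std.Symm fun i j => w i j ≤ ENNReal.ofReal α := ⟨fun i j h => hw i j ▸ h⟩
  rw [unp, Finset.coe_image, Set.InjOn.pairwise_image fun _ _ _ _ h => by simpa using h]
  exact Set.pairwise_iff_lt_of_symm (r := fun i j => w i j ≤ ENNReal.ofReal α)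

theorem pairwise_prm_iff (hw : ∀ i j, w i j = w j i) (hwt : ∀ i j, wt i j = wt j i)
    {p : Finset (Fin N)} :
    (prm p : Set (VH N)).Pairwise (fun x y => dhat w wt x y ≤ ENNReal.ofReal α) ↔
      ∀ a ∈ p, ∀ b ∈ p, a < b → min (w a b) (wt a b) ≤ ENNReal.ofReal α := by
  have : Std.Symm fun x y => dhat w wt x y ≤ ENNReal.ofReal α :=
    ⟨fun x y h => dhat_comm hw hwt x y ▸ h⟩
  rw [prm, Finset.coe_image, Set.InjOn.pairwise_image fun _ _ _ _ h => by simpa using h]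
  refine Set.pairwise_iff_lt_of_symm.trans <|
    forall₂_congr fun a _ => forall₂_congr fun b _ => imp_congr_right fun hab => ?_
  rw [Function.onFun, dhat_inr_inr, if_neg hab.ne]

theorem isVR_unp_union_prm_iff (hw : ∀ i j, w i j = w j i) (hwt : ∀ i j, wt i j = wt j i)
    {s p : Finset (Fin N)} :
    IsVR (dhat w wt) α (unp s ∪ prm p) ↔
      (s ∪ p).Nonempty ∧ (∀ a ∈ s, ∀ b ∈ p, a ≤ b) ∧
        (∀ a ∈ s, ∀ b ∈ s ∪ p, a < b → w a b ≤ ENNReal.ofReal α) ∧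
        (∀ a ∈ p, ∀ b ∈ p, a < b → min (w a b) (wt a b) ≤ ENNReal.ofReal α) := by
  have : Std.Symm fun x y => dhat w wt x y ≤ ENNReal.ofReal α :=
    ⟨fun x y h => dhat_comm hw hwt x y ▸ h⟩
  have hne : (unp s ∪ prm p).Nonempty ↔ (s ∪ p).Nonempty := by
    simp [unp, prm, Finset.union_nonempty]
  have hcross : (∀ x ∈ (unp s : Set (VH N)), ∀ y ∈ (prm p : Set (VH N)), x ≠ y →
      dhat w wt x y ≤ ENNReal.ofReal α) ↔
      ∀ a ∈ s, ∀ b ∈ p, a ≤ b ∧ (a < b → w a b ≤ ENNReal.ofReal α) := by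
    simp [unp, prm, dhat_inl_inr_le_ofReal_iff]
  rw [isVR_iff_pairwise, Finset.coe_union, Set.pairwise_union_of_symm, hne, pairwise_unp_iff hw,
    pairwise_prm_iff hw hwt, hcross]
  simp only [Finset.mem_union, or_imp, forall_and]
  tauto

theorem isVR_insert_vO_unp_iff (hw : ∀ i j, w i j = w j i) {s : Finset (Fin N)} :
    IsVR (dhat w wt) α (insert vO (unp s)) ↔
      ∀ a ∈ s, ∀ b ∈ s, a < b → w a b ≤ ENNReal.ofReal α := by
  rw [isVR_iff_pairwise, Finset.coe_insert, Set.pairwise_insert, pairwise_unp_iff hw]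
  simp [unp, vO, dhat]

theorem eq_unp_union_prm_of_vO_notMem {σ : Finset (VH N)} (hO : vO ∉ σ) :
    σ = unp (uIdx σ) ∪ prm (pIdx σ) := by
  ext x
  rcases x with (i | i) | _
  · simp [unp, prm, uIdx]
  · simp [unp, prm, pIdx]
  · exact iff_of_false hO (by simp [unp, prm])

theorem eq_insert_vO_unp_of_isVR {σ : Finset (VH N)} (h : IsVR (dhat w wt) α σ) (hO : vO ∈ σ) :
    σ = insert vO (unp (uIdx σ)) := by
  ext x
  rcases x with (i | i) | _
  · simp [unp, uIdx, vO]
  · simpa [unp, vO] using fun hi =>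
      ENNReal.ofReal_lt_top.not_ge (h.2 vO hO (Sum.inl (Sum.inr i)) hi (by simp [vO]))
  · exact iff_of_true hO (Finset.mem_insert_self _ _)

end

theorem isVR_hatGwwt_iff_general
    (N : ℕ) (w wt : Fin N → Fin N → ℝ≥0∞)
    (hw : ∀ i j, w i j = w j i) (hwt : ∀ i j, wt i j = wt j i)
    (α : ℝ) (σ : Finset (VH N)) :
    IsVR (dhat w wt) α σ ↔
      -- form (1)
      (∃ s p : Finset (Fin N), s.Nonempty ∧ p.Nonempty ∧
        (∃ m, m ∈ s ∧ m ∈ p ∧ (∀ a ∈ s, a ≤ m) ∧ (∀ b ∈ p, m ≤ b)) ∧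
        σ = unp s ∪ prm p ∧
        (∀ a ∈ s, ∀ b ∈ s ∪ p, a < b → w a b ≤ ENNReal.ofReal α) ∧
        (∀ a ∈ p, ∀ b ∈ p, a < b → min (w a b) (wt a b) ≤ ENNReal.ofReal α)) ∨
      -- form (2)
      (∃ s p : Finset (Fin N), (s ∪ p).Nonempty ∧
        (∀ a ∈ s, ∀ b ∈ p, a < b) ∧
        σ = unp s ∪ prm p ∧
        (∀ a ∈ s, ∀ b ∈ s ∪ p, a < b → w a b ≤ ENNReal.ofReal α) ∧
        (∀ a ∈ p, ∀ b ∈ p, a < b → min (w a b) (wt a b) ≤ ENNReal.ofReal α)) ∨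
      -- form (3)
      (∃ s : Finset (Fin N), σ = insert vO (unp s) ∧
        (∀ a ∈ s, ∀ b ∈ s, a < b → w a b ≤ ENNReal.ofReal α)) := by
  constructor
  · intro h
    by_cases hO : vO ∈ σ
    · have hσ := eq_insert_vO_unp_of_isVR h hO
      exact Or.inr (Or.inr ⟨_, hσ, (isVR_insert_vO_unp_iff hw).1 (hσ ▸ h)⟩)
    · have hσ := eq_unp_union_prm_of_vO_notMem hO
      obtain ⟨hne, hle, h1, h2⟩ := (isVR_unp_union_prm_iff hw hwt).1 (hσ ▸ h)
      rcases Finset.forall_le_iff_exists_or_forall_lt.1 hle with ⟨m, hms, hmp, hsm, hmp'⟩ | hlt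
      · exact Or.inl ⟨_, _, ⟨m, hms⟩, ⟨m, hmp⟩, ⟨m, hms, hmp, hsm, hmp'⟩, hσ, h1, h2⟩
      · exact Or.inr (Or.inl ⟨_, _, hne, hlt, hσ, h1, h2⟩)
  · rintro (⟨s, p, hs, -, hm, rfl, h1, h2⟩ | ⟨s, p, hne, hlt, rfl, h1, h2⟩ | ⟨s, rfl, h⟩)
    · exact (isVR_unp_union_prm_iff hw hwt).2 ⟨hs.mono Finset.subset_union_left,
        Finset.forall_le_iff_exists_or_forall_lt.2 (Or.inl hm), h1, h2⟩
    · exact (isVR_unp_union_prm_iff hw hwt).2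
        ⟨hne, Finset.forall_le_iff_exists_or_forall_lt.2 (Or.inr hlt), h1, h2⟩
    · exact (isVR_insert_vO_unp_iff hw).2 h

/-- **Characterization of the simplexes of `R_α(Ĝ^{w,w̃})`.**  A nonempty subset `σ` of the
vertex set of `Ĝ^{w,w̃}` is a simplex of the Vietoris–Rips complex `R_α(Ĝ^{w,w̃})` if and
only if it has one of the following three forms (here `s`, `p` are the sets of indices of
the unprimed and primed vertices of `σ`):
(1) `{A_{i_1},…,A_{i_k}, A'_{i_k},…,A'_{i_n}}` with `1 ≤ k ≤ n`, i.e. `s` and `p` are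
nonempty and share exactly the element `m = max s = min p`, subject to
`w_{A_{i_r}A_{i_s}} ≤ α` whenever `r < s` and `r ≤ k` (i.e. for every pair `a < b` of
indices of `σ` whose smaller member `a` lies in `s`), and
`min(w_{A_{i_r}A_{i_s}}, w̃_{A_{i_r}A_{i_s}}) ≤ α` whenever `k ≤ r < s` (i.e. for every
pair `a < b` with both members in `p`);
(2) `{A_{i_1},…,A_{i_{k-1}}, A'_{i_k},…,A'_{i_n}}` with `1 ≤ k ≤ n + 1`, i.e. every element
of `s` is smaller than every element of `p`, subject to the same two weight conditions;
(3) `{O, A_{i_1},…,A_{i_n}}` with `w_{A_{i_r}A_{i_s}} ≤ α` for all `r < s`. -/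
theorem isVR_hatGwwt_iff
    (N : ℕ) (w wt : Fin N → Fin N → ℝ≥0∞)
    (hw : ∀ i j, w i j = w j i) (hwt : ∀ i j, wt i j = wt j i)
    (α : ℝ) (hα : 0 ≤ α) (σ : Finset (VH N)) :
    IsVR (dhat w wt) α σ ↔
      -- form (1)
      (∃ s p : Finset (Fin N), s.Nonempty ∧ p.Nonempty ∧
        (∃ m, m ∈ s ∧ m ∈ p ∧ (∀ a ∈ s, a ≤ m) ∧ (∀ b ∈ p, m ≤ b)) ∧
        σ = unp s ∪ prm p ∧
        (∀ a ∈ s, ∀ b ∈ s ∪ p, a < b → w a b ≤ ENNReal.ofReal α) ∧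
        (∀ a ∈ p, ∀ b ∈ p, a < b → min (w a b) (wt a b) ≤ ENNReal.ofReal α)) ∨
      -- form (2)
      (∃ s p : Finset (Fin N), (s ∪ p).Nonempty ∧
        (∀ a ∈ s, ∀ b ∈ p, a < b) ∧
        σ = unp s ∪ prm p ∧
        (∀ a ∈ s, ∀ b ∈ s ∪ p, a < b → w a b ≤ ENNReal.ofReal α) ∧
        (∀ a ∈ p, ∀ b ∈ p, a < b → min (w a b) (wt a b) ≤ ENNReal.ofReal α)) ∨
      -- form (3)
      (∃ s : Finset (Fin N), σ = insert vO (unp s) ∧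
        (∀ a ∈ s, ∀ b ∈ s, a < b → w a b ≤ ENNReal.ofReal α)) :=
  isVR_hatGwwt_iff_general N w wt hw hwt α σ

end RTD
end
end

section
/- Let w be a weight function on V and α ≥ 0. The map φ̃ is a chain map between the augmented ℤ/2 chain complexes of R_α(Ĝ^w) and R_α(G^w)[-1], and φ̃ ∘ φ = Id on the augmented chain complex R_α(G^w)[-1]. -/
open scoped ENNReal
noncomputable section
attribute [local instance] Classical.propDecidable

namespace RTD

/-- Vertices of the graph Ĝ^w: the vertices `A_i` (`.inl (.inl i)`), their copies `A'_i`
(`.inl (.inr i)`), and the two extra vertices `O` (`.inr false`) and `O'` (`.inr true`). -/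
abbrev VH2 (N : ℕ) := (Fin N ⊕ Fin N) ⊕ Bool

/-- The edge weights of the weighted graph Ĝ^w (values on the diagonal are irrelevant). -/
def dhat2 {N : ℕ} (w : Fin N → Fin N → ℝ≥0∞) : VH2 N → VH2 N → ℝ≥0∞
  | Sum.inl (Sum.inl i), Sum.inl (Sum.inl j) => w i j
  | Sum.inl (Sum.inl i), Sum.inl (Sum.inr j) =>
      if i < j then w i j else if i = j then 0 else ⊤
  | Sum.inl (Sum.inr i), Sum.inl (Sum.inl j) =>
      if j < i then w j i else if j = i then 0 else ⊤
  | Sum.inl (Sum.inr _), Sum.inl (Sum.inr _) => 0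
  | Sum.inl (Sum.inl _), Sum.inr b => if b then ⊤ else 0
  | Sum.inr b, Sum.inl (Sum.inl _) => if b then ⊤ else 0
  | Sum.inl (Sum.inr _), Sum.inr b => if b then 0 else ⊤
  | Sum.inr b, Sum.inl (Sum.inr _) => if b then 0 else ⊤
  | Sum.inr a, Sum.inr b => if a = b then 0 else ⊤

/-- The set of unprimed vertices `A_i`, `i ∈ s`, of Ĝ^w. -/
def unp2 {N : ℕ} (s : Finset (Fin N)) : Finset (VH2 N) :=
  s.image fun i => Sum.inl (Sum.inl i)

/-- The set of primed vertices `A'_i`, `i ∈ s`, of Ĝ^w. -/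
def prm2 {N : ℕ} (s : Finset (Fin N)) : Finset (VH2 N) :=
  s.image fun i => Sum.inl (Sum.inr i)

/-- The extra vertex `O` of Ĝ^w. -/
def vO2 {N : ℕ} : VH2 N := Sum.inr false

/-- The extra vertex `O'` of Ĝ^w. -/
def vO2' {N : ℕ} : VH2 N := Sum.inr true

/-- The indices `i` with `A_i ∈ τ`. -/
def uIdx2 {N : ℕ} (τ : Finset (VH2 N)) : Finset (Fin N) :=
  Finset.univ.filter fun i => Sum.inl (Sum.inl i) ∈ τ

/-- The indices `i` with `A'_i ∈ τ`. -/
def pIdx2 {N : ℕ} (τ : Finset (VH2 N)) : Finset (Fin N) :=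
  Finset.univ.filter fun i => Sum.inl (Sum.inr i) ∈ τ

end RTD
namespace RTD

/-- The coefficient of the simplex `τ` of Ĝ^w in
`φ(A_{i_1}…A_{i_n}[-1]) = O A_{i_1}…A_{i_n} + O' A'_{i_1}…A'_{i_n}
 + Σ_{k=1}^{n} A_{i_1}…A_{i_k} A'_{i_k}…A'_{i_n}`,
where `σ = {i_1 < … < i_n}`; for `σ = ∅` this gives `φ(1[-1]) = {O} + {O'}`. -/
def phiCoeff {N : ℕ} (σ : Finset (Fin N)) (τ : Finset (VH2 N)) : ZMod 2 :=
  (if τ = insert vO2 (unp2 σ) then 1 else 0) +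
  (if τ = insert vO2' (prm2 σ) then 1 else 0) +
  ∑ m ∈ σ,
    (if τ = unp2 (σ.filter fun a => a ≤ m) ∪ prm2 (σ.filter fun a => m ≤ a) then 1 else 0)

/-- The map `φ : R_α(G^w)[-1] → R_α(Ĝ^w)`, written with position `n + 1` of the
suspension identified with position `n` of the augmented complex of `R_α(G^w)`. -/
def phi {N : ℕ} (w : Fin N → Fin N → ℝ≥0∞) (α : ℝ) (n : ℕ) :
    Ch w α n →ₗ[ZMod 2] Ch (dhat2 w) α (n + 1) :=
  lmap fun σ τ => phiCoeff σ.1 τ.1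

/-- The map `φ̃ : R_α(Ĝ^w) → R_α(G^w)[-1]` sending `O A_{i_1}…A_{i_n} ↦ A_{i_1}…A_{i_n}[-1]`,
`{O} ↦ 1[-1]` and every other basis element to `0`, written with position `n + 1` of the
suspension identified with position `n` of the augmented complex of `R_α(G^w)`. -/
def phitilde {N : ℕ} (w : Fin N → Fin N → ℝ≥0∞) (α : ℝ) (n : ℕ) :
    Ch (dhat2 w) α (n + 1) →ₗ[ZMod 2] Ch w α n :=
  lmap fun ρ τ => if ρ.1 = insert vO2 (unp2 τ.1) then 1 else 0

/-- The coefficient of `ρ` in `h(τ)`: for `τ = A_{i_1}…A_{i_k}A'_{i_{k+1}}…A'_{i_n}`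
(including the purely primed case `k = 0` and the augmentation generator `τ = ∅`),
`h(τ) = Σ_{l=1}^{k} A_{i_1}…A_{i_l}A'_{i_l}…A'_{i_n} + O'A'_{i_1}…A'_{i_n}`,
and `h = 0` on every other basis element. -/
def hCoeff {N : ℕ} (τ ρ : Finset (VH2 N)) : ZMod 2 :=
  if τ = unp2 (uIdx2 τ) ∪ prm2 (pIdx2 τ) ∧ (∀ a ∈ uIdx2 τ, ∀ b ∈ pIdx2 τ, a < b) then
    (if ρ = insert vO2' (prm2 (uIdx2 τ ∪ pIdx2 τ)) then 1 else 0) +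
    ∑ l ∈ uIdx2 τ,
      (if ρ = unp2 ((uIdx2 τ ∪ pIdx2 τ).filter fun a => a ≤ l) ∪
            prm2 ((uIdx2 τ ∪ pIdx2 τ).filter fun a => l ≤ a) then 1 else 0)
  else 0

/-- The degree `+1` map `h` on the augmented chain complex of `R_α(Ĝ^w)`. -/
def hmap {N : ℕ} (w : Fin N → Fin N → ℝ≥0∞) (α : ℝ) (n : ℕ) :
    Ch (dhat2 w) α n →ₗ[ZMod 2] Ch (dhat2 w) α (n + 1) :=
  lmap fun τ ρ => hCoeff τ.1 ρ.1

end RTD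

namespace RTD

/-!
`φ̃ f` is `f` precomposed with the coning map `τ ↦ Oτ`. A Vietoris–Rips simplex of
`Ĝ^w` containing `O` has no other vertex than `O` and unprimed ones, since `O` lies at distance
`∞` from `O'` and from every `A'_i`; so the simplexes containing `Oτ` are exactly the cones `Oσ`
over the simplexes `σ ⊇ τ`, which makes coning commute with the (subset-incidence) boundary.
Among the terms of `φ(σ[-1])` only `Oσ` contains `O`, whence `φ̃ ∘ φ = Id`.
-/

section lmap

/- The `Fintype` instances are left to unification: inside `bdry`, `phi` and `phitilde` they are
built from `Classical.propDecidable` and are not defeq to the synthesized ones. -/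
variable {ι κ ι₀ κ₀ : Type*} {_ : Fintype ι}

lemma lmap_apply (M : ι → κ → ZMod 2) (f : ι → ZMod 2) (k : κ) :
    lmap M f k = ∑ i, M i k * f i :=
  rfl

lemma lmap_eq_funLeft [DecidableEq ι] {M : ι → κ → ZMod 2} {e : κ → ι}
    (hM : ∀ i k, M i k = if i = e k then 1 else 0) :
    lmap M = LinearMap.funLeft (ZMod 2) (ZMod 2) e := by
  refine LinearMap.ext fun f => funext fun k => ?_
  simp [lmap_apply, LinearMap.funLeft_apply, hM]

lemma lmap_comp_funLeft_of_injective {_ : Fintype κ} {e : ι → κ} (he : Function.Injective e)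
    {e₀ : ι₀ → κ₀} {M : ι → ι₀ → ZMod 2} {M' : κ → κ₀ → ZMod 2}
    (hM : ∀ i i₀, M' (e i) (e₀ i₀) = M i i₀)
    (hM' : ∀ k i₀, k ∉ Set.range e → M' k (e₀ i₀) = 0) :
    lmap M ∘ₗ LinearMap.funLeft (ZMod 2) (ZMod 2) e =
      LinearMap.funLeft (ZMod 2) (ZMod 2) e₀ ∘ₗ lmap M' := by
  refine LinearMap.ext fun f => funext fun i₀ => ?_
  simp only [LinearMap.comp_apply, LinearMap.funLeft_apply, lmap_apply]
  exact Fintype.sum_of_injective e he _ _ (fun k hk => by rw [hM' k i₀ hk, zero_mul])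
    fun i => by rw [hM]

lemma funLeft_comp_lmap_eq_id [DecidableEq ι] {e : ι → κ} {M : ι → κ → ZMod 2}
    (hM : ∀ i j, M i (e j) = if i = j then 1 else 0) :
    LinearMap.funLeft (ZMod 2) (ZMod 2) e ∘ₗ lmap M = LinearMap.id := by
  refine LinearMap.ext fun f => funext fun j => ?_
  simp [LinearMap.funLeft_apply, lmap_apply, hM]

end lmap

section cone

variable {N : ℕ}

@[simp]
lemma inl_inl_mem_unp2 {s : Finset (Fin N)} {i : Fin N} :
    (Sum.inl (Sum.inl i) : VH2 N) ∈ unp2 s ↔ i ∈ s := by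
  simp [unp2]

lemma vO2_notMem_unp2 (s : Finset (Fin N)) : (vO2 : VH2 N) ∉ unp2 s := by
  simp [unp2, vO2]

lemma card_insert_vO2_unp2 (s : Finset (Fin N)) :
    (insert vO2 (unp2 s)).card = s.card + 1 := by
  rw [Finset.card_insert_of_notMem (vO2_notMem_unp2 s), unp2,
    Finset.card_image_of_injective _ fun a b h => by simpa using h]

lemma insert_vO2_unp2_subset_iff {s t : Finset (Fin N)} :
    insert vO2 (unp2 s) ⊆ insert vO2 (unp2 t) ↔ s ⊆ t := by
  refine ⟨fun h i hi => ?_, fun h => Finset.insert_subset_insert _ (Finset.image_subset_image h)⟩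
  have hi' := h (Finset.mem_insert_of_mem (inl_inl_mem_unp2.2 hi))
  simpa [vO2] using hi'

lemma insert_vO2_unp2_injective :
    Function.Injective fun s : Finset (Fin N) => insert vO2 (unp2 s) := fun _ _ h =>
  (insert_vO2_unp2_subset_iff.1 h.le).antisymm (insert_vO2_unp2_subset_iff.1 h.ge)

variable {w : Fin N → Fin N → ℝ≥0∞} {α : ℝ}

lemma dhat2_insert_vO2_unp2_le {σ : Finset (Fin N)}
    (hσ : ∀ x ∈ σ, ∀ y ∈ σ, x ≠ y → w x y ≤ ENNReal.ofReal α) :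
    ∀ x ∈ insert vO2 (unp2 σ), ∀ y ∈ insert vO2 (unp2 σ), x ≠ y →
      dhat2 w x y ≤ ENNReal.ofReal α := by
  intro x hx y hy hxy
  simp only [Finset.mem_insert, unp2, Finset.mem_image] at hx hy
  rcases hx with rfl | ⟨i, hi, rfl⟩ <;> rcases hy with rfl | ⟨j, hj, rfl⟩
  · exact absurd rfl hxy
  · simp [dhat2, vO2]
  · simp [dhat2, vO2]
  · simpa [dhat2] using hσ i hi j hj fun hij => hxy (hij ▸ rfl)

lemma eq_insert_vO2_unp2_uIdx2 {ρ : Finset (VH2 N)}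
    (hρ : ∀ x ∈ ρ, ∀ y ∈ ρ, x ≠ y → dhat2 w x y ≤ ENNReal.ofReal α) (hO : vO2 ∈ ρ) :
    ρ = insert vO2 (unp2 (uIdx2 ρ)) := by
  ext x
  simp only [Finset.mem_insert, unp2, uIdx2, Finset.mem_image, Finset.mem_filter,
    Finset.mem_univ, true_and]
  refine ⟨fun hx => ?_, by rintro (rfl | ⟨i, hi, rfl⟩) <;> assumption⟩
  have hOx : x ≠ vO2 → dhat2 w vO2 x ≤ ENNReal.ofReal α := hρ _ hO _ hx ∘ Ne.symm
  match x, hOx with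
  | Sum.inr false, _ => exact Or.inl rfl
  | Sum.inl (Sum.inl i), _ => exact Or.inr ⟨i, hx, rfl⟩
  | Sum.inl (Sum.inr _), hOx => simpa [dhat2, vO2] using hOx (by simp [vO2])
  | Sum.inr true, hOx => simpa [dhat2, vO2] using hOx (by simp [vO2])

lemma uIdx2_le {ρ : Finset (VH2 N)}
    (hρ : ∀ x ∈ ρ, ∀ y ∈ ρ, x ≠ y → dhat2 w x y ≤ ENNReal.ofReal α) :
    ∀ i ∈ uIdx2 ρ, ∀ j ∈ uIdx2 ρ, i ≠ j → w i j ≤ ENNReal.ofReal α := by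
  intro i hi j hj hij
  simp only [uIdx2, Finset.mem_filter] at hi hj
  simpa [dhat2] using hρ _ hi.2 _ hj.2 (by simpa using hij)

def coneO {n : ℕ} (τ : Simp w α n) : Simp (dhat2 w) α (n + 1) :=
  ⟨insert vO2 (unp2 τ.1), by rw [card_insert_vO2_unp2, τ.2.1], dhat2_insert_vO2_unp2_le τ.2.2⟩

lemma coneO_injective {n : ℕ} : Function.Injective (coneO (w := w) (α := α) (n := n)) :=
  fun _ _ h => Subtype.ext (insert_vO2_unp2_injective (congrArg Subtype.val h))

lemma mem_range_coneO {n : ℕ} {ρ : Simp (dhat2 w) α (n + 1)} (hO : vO2 ∈ ρ.1) :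
    ρ ∈ Set.range coneO := by
  have hρ := eq_insert_vO2_unp2_uIdx2 ρ.2.2 hO
  have hcard : (uIdx2 ρ.1).card = n := by
    have := ρ.2.1
    rw [hρ, card_insert_vO2_unp2] at this
    omega
  exact ⟨⟨uIdx2 ρ.1, hcard, uIdx2_le ρ.2.2⟩, Subtype.ext hρ.symm⟩

lemma phitilde_eq_funLeft (n : ℕ) :
    phitilde w α n = LinearMap.funLeft (ZMod 2) (ZMod 2) coneO :=
  lmap_eq_funLeft fun _ τ => if_congr (Subtype.ext_iff (a2 := coneO τ)).symm rfl rfl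

end cone

lemma phiCoeff_insert_vO2_unp2 {N : ℕ} (σ τ : Finset (Fin N)) :
    phiCoeff σ (insert vO2 (unp2 τ)) = if σ = τ then 1 else 0 := by
  have not_cone_O' : insert vO2 (unp2 τ) ≠ insert vO2' (prm2 σ) := fun h => by
    have hO := h ▸ Finset.mem_insert_self vO2 (unp2 τ)
    simp [vO2, vO2', prm2] at hO
  have not_path : ∀ m : Fin N, insert vO2 (unp2 τ) ≠
      unp2 (σ.filter fun a => a ≤ m) ∪ prm2 (σ.filter fun a => m ≤ a) := fun m h => by
    have hO := h ▸ Finset.mem_insert_self vO2 (unp2 τ)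
    simp [vO2, unp2, prm2] at hO
  simp only [phiCoeff, if_neg not_cone_O', if_neg (not_path _), Finset.sum_const_zero, add_zero,
    insert_vO2_unp2_injective.eq_iff, eq_comm]

theorem phitilde_chainmap_and_retraction_general
    (N : ℕ) (w : Fin N → Fin N → ℝ≥0∞)
    (α : ℝ) :
    -- φ̃ is a chain map
    (∀ n : ℕ,
      bdry w α n ∘ₗ phitilde w α (n + 1) = phitilde w α n ∘ₗ bdry (dhat2 w) α (n + 1)) ∧
    -- φ̃ ∘ φ = Id
    (∀ n : ℕ, phitilde w α n ∘ₗ phi w α n = LinearMap.id) := by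
  refine ⟨fun n => ?_, fun n => ?_⟩
  · rw [phitilde_eq_funLeft, phitilde_eq_funLeft]
    refine lmap_comp_funLeft_of_injective coneO_injective (fun σ τ => ?_) fun ρ τ hρ => ?_
    · simp only [coneO, insert_vO2_unp2_subset_iff]
      congr -- the two sides differ only in their `Decidable` instances
    · exact if_neg fun hsub => hρ (mem_range_coneO (hsub (Finset.mem_insert_self _ _)))
  · rw [phitilde_eq_funLeft]
    exact funLeft_comp_lmap_eq_id fun σ τ => by
      simp only [coneO, phiCoeff_insert_vO2_unp2, Subtype.ext_iff]

/-- **`φ̃` is a chain map and `φ̃ ∘ φ = Id`.**  The map `φ̃ : R_α(Ĝ^w) → R_α(G^w)[-1]`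
commutes with the differentials of the augmented ℤ/2 chain complexes, and
`φ̃ ∘ φ` is the identity of the suspended augmented chain complex `R_α(G^w)[-1]`
(position `n + 1` of the suspension being identified with position `n` of the augmented
complex of `R_α(G^w)`; at the bottom position of the suspension both sides vanish). -/
theorem phitilde_chainmap_and_retraction
    (N : ℕ) (w : Fin N → Fin N → ℝ≥0∞) (hw : ∀ i j, w i j = w j i)
    (α : ℝ) (hα : 0 ≤ α) :
    -- φ̃ is a chain map
    (∀ n : ℕ,
      bdry w α n ∘ₗ phitilde w α (n + 1) = phitilde w α n ∘ₗ bdry (dhat2 w) α (n + 1)) ∧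
    -- φ̃ ∘ φ = Id
    (∀ n : ℕ, phitilde w α n ∘ₗ phi w α n = LinearMap.id) :=
  phitilde_chainmap_and_retraction_general N w α

end RTD
end
end
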